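/- For a wall W of sidelength k in a graph G, the family T_W of separations (A, B) of order less than ⌈k/3⌉ such that B \ A contains at least k - ⌈k/3⌉ + 1 full rows and columns of W, is a tangle of order ⌈k/3⌉: for every separation (A, B) of order less than ⌈k/3⌉ exactly one of (A, B), (B, A) belongs to T_W, and for every three separations (A1,B1),(A2,B2),(A3,B3) in T_W we have A1 ∪ A2 ∪ A3 ≠ V(G). -/

import Mathlib

/-! A separation of order `< ⌈k/3⌉` leaves more than `k - ⌈k/3⌉` rows and as many columns
untouched by its separator; each of them is connected, so it lies on one strict side, and since
every row meets every column they all lie on the same side. Orienting the separation towards that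
side gives the unique member of `T_W`. Each member of `T_W` misses fewer than `⌈k/3⌉` rows, so
three of them miss fewer than `k` rows together: some row lies in all three big sides, and its
vertices avoid the three small sides. -/

/-- A separation `(A, B)` of a graph `G`: `A ∪ B = V(G)` and there is no edge between
`A \ B` and `B \ A`.  Its order is `|A ∩ B|`. -/
def IsSeparation {V : Type*} (G : SimpleGraph V) (A B : Set V) : Prop :=
  A ∪ B = Set.univ ∧ ∀ a ∈ A \ B, ∀ b ∈ B \ A, ¬ G.Adj a b

/-- An (abstract) wall of sidelength `k` in `G`, given by its `k` rows and `k` columns: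
each row and each column induces a connected subgraph (a path), the rows are pairwise
disjoint, the columns are pairwise disjoint, and every row meets every column. -/
structure IsWall {V : Type*} (G : SimpleGraph V) (k : ℕ)
    (rows cols : Fin k → Set V) : Prop where
  rows_conn : ∀ i, (G.induce (rows i)).Connected
  cols_conn : ∀ j, (G.induce (cols j)).Connected
  rows_disj : ∀ i i', i ≠ i' → Disjoint (rows i) (rows i')
  cols_disj : ∀ j j', j ≠ j' → Disjoint (cols j) (cols j')
  row_meets_col : ∀ i j, (rows i ∩ cols j).Nonempty

/-- `Γ` contains at least `m` full rows (resp. columns) from the family `rows`. -/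
def ContainsFullRows {V : Type*} {k : ℕ} (rows : Fin k → Set V) (m : ℕ)
    (Γ : Set V) : Prop :=
  m ≤ {i : Fin k | rows i ⊆ Γ}.ncard

/-- Membership in the tangle `T_W` governed by a wall `W` of sidelength `k` (given by its
rows and columns): separations `(A, B)` of order less than `⌈k/3⌉` such that `B \ A`
contains at least `k - ⌈k/3⌉ + 1` full rows and full columns of `W`.
(Note `⌈k/3⌉ = (k + 2) / 3` in natural numbers.) -/
def InWallTangle {V : Type*} (G : SimpleGraph V) (k : ℕ)
    (rows cols : Fin k → Set V) (A B : Set V) : Prop :=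
  IsSeparation G A B ∧ (A ∩ B).ncard < (k + 2) / 3 ∧
    ContainsFullRows rows (k - (k + 2) / 3 + 1) (B \ A) ∧
    ContainsFullRows cols (k - (k + 2) / 3 + 1) (B \ A)

open Function

lemma Set.ncard_add_ncard_le_ncard_inter_add_card {α : Type*} [Finite α] (s t : Set α) :
    s.ncard + t.ncard ≤ (s ∩ t).ncard + Nat.card α := by
  rw [← Set.ncard_inter_add_ncard_union s t]
  exact Nat.add_le_add_left (Set.ncard_le_card _) _

section DisjointFamily

variable {ι V : Type*} {f : ι → Set V} {X : Set V}

lemma ncard_not_disjoint_le (hf : Pairwise (Disjoint on f)) (hX : X.Finite) :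
    {i | ¬ Disjoint (f i) X}.ncard ≤ X.ncard := by
  have hmeet (i : {i | ¬ Disjoint (f i) X}) : ∃ x : X, (x : V) ∈ f i := by
    obtain ⟨x, hxf, hxX⟩ := Set.not_disjoint_iff.mp i.2
    exact ⟨⟨x, hxX⟩, hxf⟩
  choose g hg using hmeet
  have := hX.to_subtype
  rw [← Nat.card_coe_set_eq, ← Nat.card_coe_set_eq]
  refine Nat.card_le_card_of_injective g fun i j hij => Subtype.ext ?_
  by_contra hne
  exact Set.disjoint_left.mp (hf hne) (hg i) (hij ▸ hg j)

lemma card_sub_ncard_le_ncard_disjoint [Finite ι] (hf : Pairwise (Disjoint on f))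
    (hX : X.Finite) : Nat.card ι - X.ncard ≤ {i | Disjoint (f i) X}.ncard := by
  have hsplit := Set.ncard_add_ncard_compl {i | Disjoint (f i) X}
  rw [Set.compl_ofPred] at hsplit
  have := ncard_not_disjoint_le hf hX
  omega

end DisjointFamily

namespace IsSeparation

variable {V : Type*} {G : SimpleGraph V} {A B : Set V}

lemma symm (h : IsSeparation G A B) : IsSeparation G B A :=
  ⟨Set.union_comm A B ▸ h.1, fun a ha b hb hab => h.2 b hb a ha hab.symm⟩

lemma mem_sdiff_or_mem_sdiff (h : IsSeparation G A B) {v : V} (hv : v ∉ A ∩ B) :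
    v ∈ A \ B ∨ v ∈ B \ A := by
  have hvAB : v ∈ A ∪ B := h.1 ▸ Set.mem_univ v
  by_cases hvA : v ∈ A
  · exact Or.inl ⟨hvA, fun hvB => hv ⟨hvA, hvB⟩⟩
  · exact Or.inr ⟨hvAB.resolve_left hvA, hvA⟩

lemma mem_sdiff_of_adj (h : IsSeparation G A B) {v w : V} (hv : v ∈ B \ A) (hvw : G.Adj v w)
    (hw : w ∉ A ∩ B) : w ∈ B \ A :=
  (h.mem_sdiff_or_mem_sdiff hw).resolve_left fun hwA => h.2 w hwA v hv hvw.symm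

lemma subset_sdiff_of_connected (h : IsSeparation G A B) {S : Set V}
    (hS : (G.induce S).Connected) (hSX : Disjoint S (A ∩ B)) (hmeet : (S ∩ (B \ A)).Nonempty) :
    S ⊆ B \ A := by
  obtain ⟨v, hvS, hv⟩ := hmeet
  suffices ∀ w : S, (G.induce S).Reachable ⟨v, hvS⟩ w → (w : V) ∈ B \ A from
    fun w hwS => this ⟨w, hwS⟩ (hS.preconnected _ _)
  intro w hw
  have hrel := SimpleGraph.reachable_iff_reflTransGen _ _ |>.mp hw
  clear hw
  induction hrel with
  | refl => exact hv
  | @tail u u' _ hadj ih => exact h.mem_sdiff_of_adj ih hadj (Set.disjoint_left.mp hSX u'.2)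

lemma card_sub_le_ncard_subset_sdiff {ι : Type*} [Finite ι] (h : IsSeparation G A B)
    (hX : (A ∩ B).Finite) {f : ι → Set V} (hf : Pairwise (Disjoint on f))
    (hconn : ∀ i, (G.induce (f i)).Connected) (hmeet : ∀ i, (f i ∩ (B \ A)).Nonempty) :
    Nat.card ι - (A ∩ B).ncard ≤ {i | f i ⊆ B \ A}.ncard :=
  (card_sub_ncard_le_ncard_disjoint hf hX).trans <| Set.ncard_le_ncard
    (fun i hi => h.subset_sdiff_of_connected (hconn i) hi (hmeet i)) (Set.toFinite _)

end IsSeparation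

namespace IsWall

variable {V : Type*} {G : SimpleGraph V} {k : ℕ} {rows cols : Fin k → Set V} {A B : Set V}

lemma row_nonempty (hW : IsWall G k rows cols) (i : Fin k) : (rows i).Nonempty :=
  Set.nonempty_coe_sort.mp (hW.rows_conn i).nonempty

lemma inWallTangle_of_row_subset [Finite V] (hW : IsWall G k rows cols)
    (hsep : IsSeparation G A B) (hord : (A ∩ B).ncard < (k + 2) / 3) {i₀ : Fin k}
    (hi₀ : rows i₀ ⊆ B \ A) : InWallTangle G k rows cols A B := by
  have hcols := hsep.card_sub_le_ncard_subset_sdiff (Set.toFinite _)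
    (fun j j' => hW.cols_disj j j') hW.cols_conn fun j => by
      obtain ⟨v, hvr, hvc⟩ := hW.row_meets_col i₀ j
      exact ⟨v, hvc, hi₀ hvr⟩
  rw [Nat.card_fin] at hcols
  obtain ⟨j₀, hj₀⟩ := Set.nonempty_of_ncard_ne_zero (s := {j | cols j ⊆ B \ A}) (by omega)
  have hrows := hsep.card_sub_le_ncard_subset_sdiff (Set.toFinite _)
    (fun i i' => hW.rows_disj i i') hW.rows_conn fun i => by
      obtain ⟨v, hvr, hvc⟩ := hW.row_meets_col i j₀
      exact ⟨v, hvr, hj₀ hvc⟩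
  rw [Nat.card_fin] at hrows
  exact ⟨hsep, hord, by unfold ContainsFullRows; omega, by unfold ContainsFullRows; omega⟩

lemma inWallTangle_or_inWallTangle_swap [Finite V] (hW : IsWall G k rows cols)
    (hsep : IsSeparation G A B) (hord : (A ∩ B).ncard < (k + 2) / 3) :
    InWallTangle G k rows cols A B ∨ InWallTangle G k rows cols B A := by
  have hclean := card_sub_ncard_le_ncard_disjoint (fun i i' => hW.rows_disj i i')
    (A ∩ B).toFinite
  rw [Nat.card_fin] at hclean
  obtain ⟨i₀, hi₀⟩ := Set.nonempty_of_ncard_ne_zero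
    (s := {i | Disjoint (rows i) (A ∩ B)}) (by omega)
  obtain ⟨v, hv⟩ := hW.row_nonempty i₀
  rcases hsep.mem_sdiff_or_mem_sdiff (Set.disjoint_left.mp hi₀ hv) with hvA | hvB
  · rw [Set.inter_comm] at hord hi₀
    exact Or.inr <| hW.inWallTangle_of_row_subset hsep.symm hord <|
      hsep.symm.subset_sdiff_of_connected (hW.rows_conn i₀) hi₀ ⟨v, hv, hvA⟩
  · exact Or.inl <| hW.inWallTangle_of_row_subset hsep hord <|
      hsep.subset_sdiff_of_connected (hW.rows_conn i₀) hi₀ ⟨v, hv, hvB⟩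

lemma not_inWallTangle_and_swap (hW : IsWall G k rows cols)
    (hAB : InWallTangle G k rows cols A B) (hBA : InWallTangle G k rows cols B A) : False := by
  have hdisj : {i | rows i ⊆ B \ A} ∩ {i | rows i ⊆ A \ B} = ∅ := by
    refine Set.eq_empty_of_forall_notMem fun i ⟨hiB, hiA⟩ => ?_
    obtain ⟨v, hv⟩ := hW.row_nonempty i
    exact (hiB hv).2 (hiA hv).1
  have hcard := Set.ncard_add_ncard_le_ncard_inter_add_card
    {i | rows i ⊆ B \ A} {i | rows i ⊆ A \ B}
  rw [hdisj, Set.ncard_empty, Nat.card_fin] at hcard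
  have := hAB.2.2.1
  have := hBA.2.2.1
  unfold ContainsFullRows at *
  omega

lemma union_union_ne_univ (hW : IsWall G k rows cols) {A₁ B₁ A₂ B₂ A₃ B₃ : Set V}
    (h₁ : InWallTangle G k rows cols A₁ B₁) (h₂ : InWallTangle G k rows cols A₂ B₂)
    (h₃ : InWallTangle G k rows cols A₃ B₃) : A₁ ∪ A₂ ∪ A₃ ≠ Set.univ := by
  have h₁₂ := Set.ncard_add_ncard_le_ncard_inter_add_card
    {i | rows i ⊆ B₁ \ A₁} {i | rows i ⊆ B₂ \ A₂}
  have h₁₂₃ := Set.ncard_add_ncard_le_ncard_inter_add_card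
    ({i | rows i ⊆ B₁ \ A₁} ∩ {i | rows i ⊆ B₂ \ A₂}) {i | rows i ⊆ B₃ \ A₃}
  have := h₁.2.2.1
  have := h₂.2.2.1
  have := h₃.2.2.1
  unfold ContainsFullRows at *
  rw [Nat.card_fin] at h₁₂ h₁₂₃
  obtain ⟨i, ⟨hi₁, hi₂⟩, hi₃⟩ := Set.nonempty_of_ncard_ne_zero
    (s := {i | rows i ⊆ B₁ \ A₁} ∩ {i | rows i ⊆ B₂ \ A₂} ∩ {i | rows i ⊆ B₃ \ A₃}) (by omega)
  obtain ⟨v, hv⟩ := hW.row_nonempty i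
  intro hcover
  rcases hcover ▸ Set.mem_univ v with (hvA | hvA) | hvA
  exacts [(hi₁ hv).2 hvA, (hi₂ hv).2 hvA, (hi₃ hv).2 hvA]

end IsWall

/-- The family `T_W` of separations governed by a wall `W` of sidelength `k` is a tangle
of order `⌈k/3⌉`: every separation of order less than `⌈k/3⌉` has exactly one of its two
orientations in `T_W`, and no three small sides of members of `T_W` cover `V(G)`. -/
theorem wall_tangle_is_tangle {V : Type*} [Fintype V] (G : SimpleGraph V)
    {k : ℕ} (rows cols : Fin k → Set V) (hW : IsWall G k rows cols) :
    (∀ A B : Set V, IsSeparation G A B → (A ∩ B).ncard < (k + 2) / 3 →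
      ((InWallTangle G k rows cols A B ∨ InWallTangle G k rows cols B A) ∧
        ¬ (InWallTangle G k rows cols A B ∧ InWallTangle G k rows cols B A))) ∧
    (∀ A₁ B₁ A₂ B₂ A₃ B₃ : Set V,
      InWallTangle G k rows cols A₁ B₁ → InWallTangle G k rows cols A₂ B₂ →
      InWallTangle G k rows cols A₃ B₃ → A₁ ∪ A₂ ∪ A₃ ≠ Set.univ) :=
  ⟨fun _ _ hsep hord => ⟨hW.inWallTangle_or_inWallTangle_swap hsep hord,
      fun h => hW.not_inWallTangle_and_swap h.1 h.2⟩,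
    fun _ _ _ _ _ _ h₁ h₂ h₃ => hW.union_union_ne_univ h₁ h₂ h₃⟩
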